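/- Boundary-shift mass bound: Let μ̃(θ) = π(θ) exp(n ℓ(θ)) 1_Θ(θ) be an unnormalized density on Θ ⊆ [0,∞)^d, let j be a coordinate, t > 0, and G ⊆ Θ a set closed under the shift θ ↦ θ − t e_j whenever θ_j ≥ t. Suppose log π_j is L_π-Lipschitz and ∂_j ℓ(θ − u e_j) ≤ −c/2 for all θ ∈ A_j := {θ ∈ G : θ_j ≥ t} and u ∈ [0, t]. Then μ(A_j) ≤ exp(−(c/2 − L_π/n)·nt)·μ(G), where μ is the normalized probability measure. -/

import Mathlib

/-!
For `θ ∈ A := {θ ∈ G | t ≤ θ j}` the whole segment from `θ` to `θ - t • e_j` lies in `G`.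
Along it `ℓ` drops at rate at least `c / 2`, so `exp (n ℓ)` gains a factor `exp (-n c t / 2)`,
while the prior changes only in its `j`-th factor, by at most `exp (Lπ t)`. Hence
`w θ ≤ exp (Lπ t - n c t / 2) · w (θ - t • e_j)` on `A`; integrating over `A` and translating
(Lebesgue measure is translation invariant, `A - t • e_j ⊆ G`, `w ≥ 0`) bounds `∫_A w` by the
same factor times `∫_G w`.
-/

open MeasureTheory Set

namespace MeasureTheory

/-- Unlike in `ae_restrict_of_forall_mem`, `s` need not be measurable (neither `Θ` nor `G` is
assumed to be). -/
theorem ae_restrict_of_forall_mem₀ {α : Type*} [MeasurableSpace α] {μ : Measure α} {s : Set α}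
    {p : α → Prop} (hp : NullMeasurableSet {x | p x} (μ.restrict s)) (h : ∀ x ∈ s, p x) :
    ∀ᵐ x ∂μ.restrict s, p x := by
  obtain ⟨m, hm_sub, hm_meas, hm_ae⟩ := hp.compl.exists_measurable_subset_ae_eq
  change μ.restrict s {x | p x}ᶜ = 0
  rw [← measure_congr hm_ae, Measure.restrict_apply hm_meas]
  refine measure_mono_null (fun x hx => ?_) measure_empty
  exact hm_sub hx.1 (h x hx.2)

theorem ae_restrict_le_of_forall_mem {α β : Type*} [MeasurableSpace α] {μ : Measure α}
    [TopologicalSpace β] [Preorder β] [OrderClosedTopology β]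
    [TopologicalSpace.PseudoMetrizableSpace β]
    {s : Set α} {f g : α → β} (hf : AEStronglyMeasurable f (μ.restrict s))
    (hg : AEStronglyMeasurable g (μ.restrict s)) (h : ∀ x ∈ s, f x ≤ g x) :
    f ≤ᵐ[μ.restrict s] g :=
  ae_restrict_of_forall_mem₀ (AEStronglyMeasurable.nullMeasurableSet_le hf hg) h

theorem setIntegral_le_mul_setIntegral_of_le_mul_sub {G : Type*} [MeasurableSpace G] [AddGroup G]
    [MeasurableAdd G] {μ : Measure G} [μ.IsAddRightInvariant] {f : G → ℝ} {s t : Set G}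
    {v : G} {K : ℝ} (hK : 0 ≤ K) (hst : ∀ x ∈ s, x - v ∈ t) (hs : IntegrableOn f s μ)
    (ht : IntegrableOn f t μ) (hf : ∀ x ∈ t, 0 ≤ f x) (hle : ∀ x ∈ s, f x ≤ K * f (x - v)) :
    ∫ x in s, f x ∂μ ≤ K * ∫ x in t, f x ∂μ := by
  have hmp : MeasurePreserving (· - v) μ μ := measurePreserving_sub_right μ v
  have hemb : MeasurableEmbedding (· - v : G → G) :=
    (MeasurableEquiv.subRight v).measurableEmbedding
  have ht' : IntegrableOn (fun x => f (x - v)) ((· - v) ⁻¹' t) μ :=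
    ((hmp.restrict_preimage_emb hemb t).integrable_comp_emb hemb).2 ht
  have hs' : IntegrableOn (fun x => f (x - v)) s μ := ht'.mono_set hst
  calc ∫ x in s, f x ∂μ ≤ ∫ x in s, K * f (x - v) ∂μ :=
        integral_mono_ae hs (hs'.const_mul K)
          (ae_restrict_le_of_forall_mem hs.1 (hs'.const_mul K).1 hle)
    _ = K * ∫ x in s, f (x - v) ∂μ := integral_const_mul K _
    _ ≤ K * ∫ x in (· - v) ⁻¹' t, f (x - v) ∂μ := by
        refine mul_le_mul_of_nonneg_left (setIntegral_mono_set ht' ?_ ?_) hK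
        · exact ae_restrict_le_of_forall_mem aestronglyMeasurable_const ht'.1
            fun x hx => hf _ hx
        · exact Filter.Eventually.of_forall hst
    _ = K * ∫ x in t, f x ∂μ := by rw [hmp.setIntegral_preimage_emb hemb]

end MeasureTheory

theorem add_mul_le_of_fderiv_le {E : Type*} [NormedAddCommGroup E] [NormedSpace ℝ E]
    {ℓ : E → ℝ} {x e : E} {t a : ℝ} (ht : 0 ≤ t)
    (hdiff : ∀ u ∈ Icc 0 t, DifferentiableAt ℝ ℓ (x - u • e))
    (hgrad : ∀ u ∈ Icc 0 t, fderiv ℝ ℓ (x - u • e) e ≤ -a) :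
    ℓ x + a * t ≤ ℓ (x - t • e) := by
  set F : ℝ → ℝ := fun u => ℓ (x - u • e) - a * u
  have hF : ∀ u ∈ Icc 0 t, HasDerivAt F (-fderiv ℝ ℓ (x - u • e) e - a) u := by
    intro u hu
    have hline : HasDerivAt (fun u : ℝ => x - u • e) (-e) u := by
      simpa using ((hasDerivAt_id u).smul_const e).const_sub x
    have h := ((hdiff u hu).hasFDerivAt.comp_hasDerivAt u hline).sub
      ((hasDerivAt_id u).const_mul a)
    rwa [map_neg, mul_one] at h
  have hmono : MonotoneOn F (Icc 0 t) := by
    refine monotoneOn_of_hasDerivWithinAt_nonneg (convex_Icc 0 t)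
      (fun u hu => (hF u hu).continuousAt.continuousWithinAt)
      (fun u hu => (hF u (Ioo_subset_Icc_self (by rwa [interior_Icc] at hu))).hasDerivWithinAt)
      fun u hu => ?_
    rw [interior_Icc] at hu
    linarith [hgrad u (Ioo_subset_Icc_self hu)]
  have hF0t := hmono (left_mem_Icc.2 ht) (right_mem_Icc.2 ht) ht
  simp only [F, zero_smul, sub_zero, mul_zero] at hF0t
  linarith

theorem prod_le_exp_mul_prod_of_forall_ne {ι : Type*} [Fintype ι] [DecidableEq ι]
    {p : ι → ℝ → ℝ} (hp : ∀ i x, 0 < p i x) {L : ℝ} {j : ι}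
    (hlip : ∀ x y, |Real.log (p j x) - Real.log (p j y)| ≤ L * |x - y|) {x y : ι → ℝ}
    (hxy : ∀ i ≠ j, x i = y i) :
    ∏ i, p i (x i) ≤ Real.exp (L * |x j - y j|) * ∏ i, p i (y i) := by
  have hj : p j (x j) ≤ Real.exp (L * |x j - y j|) * p j (y j) := by
    rw [← Real.exp_log (hp j (x j)), ← Real.exp_log (hp j (y j)), ← Real.exp_add,
      Real.exp_le_exp]
    linarith [(abs_le.1 (hlip (x j) (y j))).2]
  have hrest : ∏ i ∈ {j}ᶜ, p i (x i) = ∏ i ∈ {j}ᶜ, p i (y i) :=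
    Finset.prod_congr rfl fun i hi => by rw [hxy i (by simpa using hi)]
  rw [Fintype.prod_eq_mul_prod_compl j, Fintype.prod_eq_mul_prod_compl j, hrest, ← mul_assoc]
  exact mul_le_mul_of_nonneg_right hj (Finset.prod_nonneg fun i _ => (hp i _).le)

theorem prod_mul_exp_le_exp_mul_sub_single {d : ℕ} {pri : Fin d → ℝ → ℝ}
    (hpri_pos : ∀ i x, 0 < pri i x) {L : ℝ} {j : Fin d}
    (hlip : ∀ x y, |Real.log (pri j x) - Real.log (pri j y)| ≤ L * |x - y|)
    {ℓ : EuclideanSpace ℝ (Fin d) → ℝ} {θ : EuclideanSpace ℝ (Fin d)} {n t a : ℝ}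
    (hn : 0 ≤ n) (ht : 0 ≤ t)
    (hdiff : ∀ u ∈ Icc 0 t, DifferentiableAt ℝ ℓ (θ - u • EuclideanSpace.single j 1))
    (hgrad : ∀ u ∈ Icc 0 t,
      fderiv ℝ ℓ (θ - u • EuclideanSpace.single j 1) (EuclideanSpace.single j 1) ≤ -a) :
    (∏ i, pri i (θ i)) * Real.exp (n * ℓ θ) ≤
      Real.exp (L * t - n * a * t) *
        ((∏ i, pri i ((θ - t • EuclideanSpace.single j 1 : EuclideanSpace ℝ (Fin d)) i)) *
          Real.exp (n * ℓ (θ - t • EuclideanSpace.single j 1))) := by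
  set θ' := θ - t • EuclideanSpace.single j (1 : ℝ)
  have hprior : ∏ i, pri i (θ i) ≤ Real.exp (L * t) * ∏ i, pri i (θ' i) := by
    have h := prod_le_exp_mul_prod_of_forall_ne hpri_pos hlip (x := fun i => θ i)
      (y := fun i => θ' i) fun i hi => by simp [θ', hi]
    simpa [θ', abs_of_nonneg ht] using h
  have hlik : Real.exp (n * ℓ θ) ≤ Real.exp (-(n * a * t)) * Real.exp (n * ℓ θ') := by
    rw [← Real.exp_add, Real.exp_le_exp]
    nlinarith [add_mul_le_of_fderiv_le ht hdiff hgrad]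
  calc (∏ i, pri i (θ i)) * Real.exp (n * ℓ θ)
      ≤ (Real.exp (L * t) * ∏ i, pri i (θ' i)) *
          (Real.exp (-(n * a * t)) * Real.exp (n * ℓ θ')) :=
        mul_le_mul hprior hlik (Real.exp_pos _).le
          (mul_nonneg (Real.exp_pos _).le (Finset.prod_nonneg fun i _ => (hpri_pos i _).le))
    _ = _ := by rw [sub_eq_add_neg, Real.exp_add]; ring

theorem boundary_shift_mass_bound_general (d : ℕ) (n t c Lπ : ℝ)
    (hn : 0 < n) (ht : 0 < t)
    (Θ G : Set (EuclideanSpace ℝ (Fin d))) (hGΘ : G ⊆ Θ)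
    (j : Fin d)
    (pri : Fin d → ℝ → ℝ) (hpri_pos : ∀ i x, 0 < pri i x)
    (hpri_lip : ∀ i x y, |Real.log (pri i x) - Real.log (pri i y)| ≤ Lπ * |x - y|)
    (ℓ : EuclideanSpace ℝ (Fin d) → ℝ)
    (hshift : ∀ θ ∈ G, ∀ u : ℝ, 0 ≤ u → u ≤ θ j →
      θ - u • EuclideanSpace.single j 1 ∈ G)
    (hdiff : ∀ θ ∈ G, DifferentiableAt ℝ ℓ θ)
    (hgrad : ∀ θ ∈ G, t ≤ θ j → ∀ u ∈ Set.Icc (0 : ℝ) t,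
      fderiv ℝ ℓ (θ - u • EuclideanSpace.single j 1) (EuclideanSpace.single j 1) ≤
        -(c / 2))
    (w : EuclideanSpace ℝ (Fin d) → ℝ)
    (hw : ∀ θ, w θ = (∏ i, pri i (θ i)) * Real.exp (n * ℓ θ))
    (Z : ℝ) (hZ : Z = ∫ θ in Θ, w θ) (hZpos : 0 < Z) :
    (∫ θ in {θ ∈ G | t ≤ θ j}, w θ) / Z ≤
      Real.exp (-(c / 2 - Lπ / n) * (n * t)) * ((∫ θ in G, w θ) / Z) := by
  have hint : IntegrableOn w Θ := Integrable.of_integral_ne_zero (hZ ▸ hZpos.ne')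
  have hrate : -(c / 2 - Lπ / n) * (n * t) = Lπ * t - n * (c / 2) * t := by
    field_simp
    ring
  have hmass : ∫ θ in {θ ∈ G | t ≤ θ j}, w θ ≤
      Real.exp (-(c / 2 - Lπ / n) * (n * t)) * ∫ θ in G, w θ := by
    refine setIntegral_le_mul_setIntegral_of_le_mul_sub (Real.exp_pos _).le
      (fun θ hθ => hshift θ hθ.1 t ht.le hθ.2) (hint.mono_set fun θ hθ => hGΘ hθ.1)
      (hint.mono_set hGΘ) (fun θ _ => ?_) fun θ ⟨hθG, hθt⟩ => ?_
    · rw [hw]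
      exact (mul_pos (Finset.prod_pos fun i _ => hpri_pos i _) (Real.exp_pos _)).le
    · rw [hw, hw, hrate]
      exact prod_mul_exp_le_exp_mul_sub_single hpri_pos (hpri_lip j) hn.le ht.le
        (fun u hu => hdiff _ (hshift θ hθG u hu.1 (hu.2.trans hθt))) (hgrad θ hθG hθt)
  rw [mul_div_assoc']
  exact div_le_div_of_nonneg_right hmass hZpos.le

/-- **Boundary-shift mass bound.** Let `μ̃(θ) = π(θ)exp(nℓ(θ))` on `Θ ⊆ [0,∞)^d` with
product prior `π(θ) = ∏ᵢ πᵢ(θᵢ)`, each `log πᵢ` being `L_π`-Lipschitz. If `G ⊆ Θ` is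
closed under the shift `θ ↦ θ − u·eⱼ` (for `0 ≤ u ≤ θⱼ`), and
`∂ⱼℓ(θ − u·eⱼ) ≤ −c/2` for all `θ ∈ Aⱼ = {θ ∈ G : θⱼ ≥ t}` and `u ∈ [0,t]`, then
`μ(Aⱼ) ≤ exp(−(c/2 − L_π/n)·nt)·μ(G)` for the normalized measure
`μ(A) = ∫_A μ̃ / ∫_Θ μ̃`. -/
theorem boundary_shift_mass_bound (d : ℕ) (n t c Lπ : ℝ)
    (hn : 0 < n) (ht : 0 < t) (hc : 0 < c) (hLπ : 0 ≤ Lπ)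
    (Θ G : Set (EuclideanSpace ℝ (Fin d))) (hGΘ : G ⊆ Θ)
    (hΘpos : ∀ θ ∈ Θ, ∀ i, 0 ≤ θ i)
    (j : Fin d)
    (pri : Fin d → ℝ → ℝ) (hpri_pos : ∀ i x, 0 < pri i x)
    (hpri_lip : ∀ i x y, |Real.log (pri i x) - Real.log (pri i y)| ≤ Lπ * |x - y|)
    (ℓ : EuclideanSpace ℝ (Fin d) → ℝ)
    (hshift : ∀ θ ∈ G, ∀ u : ℝ, 0 ≤ u → u ≤ θ j →
      θ - u • EuclideanSpace.single j 1 ∈ G)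
    (hdiff : ∀ θ ∈ G, DifferentiableAt ℝ ℓ θ)
    (hgrad : ∀ θ ∈ G, t ≤ θ j → ∀ u ∈ Set.Icc (0 : ℝ) t,
      fderiv ℝ ℓ (θ - u • EuclideanSpace.single j 1) (EuclideanSpace.single j 1) ≤
        -(c / 2))
    (w : EuclideanSpace ℝ (Fin d) → ℝ)
    (hw : ∀ θ, w θ = (∏ i, pri i (θ i)) * Real.exp (n * ℓ θ))
    (Z : ℝ) (hZ : Z = ∫ θ in Θ, w θ) (hZpos : 0 < Z) :
    (∫ θ in {θ ∈ G | t ≤ θ j}, w θ) / Z ≤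
      Real.exp (-(c / 2 - Lπ / n) * (n * t)) * ((∫ θ in G, w θ) / Z) :=
  boundary_shift_mass_bound_general d n t c Lπ hn ht Θ G hGΘ j pri hpri_pos hpri_lip ℓ hshift hdiff
    hgrad w hw Z hZ hZpos
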